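/- Let λ₀ ≤ λ₁ ≤ … ≤ λₙ be positive integers with gcd 1 and h := Σᵢ λᵢ, and suppose P = conv(ρ₀,…,ρₙ) ⊂ ℤⁿ is a simplex with Σᵢ λᵢρᵢ = 0 such that the only lattice points of P are its vertices and the origin (the 'terminal' condition). Then for every k ∈ {2,…,n}: λ_k/h < 1/(n−k+2) (strict inequality). -/

import Mathlib

/-!
If `λ_k / h ≥ 1 / (n - k + 2)`, the numbers `(n - k + 2) λ_i / h - [i ≥ k]` are convex
coefficients, and they exhibit the lattice point `-∑_{i ≥ k} ρ_i` inside `P`. By terminality this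
point is `0` or a vertex `ρ_t`, so `∑_{i ≥ k} ρ_i (+ ρ_t) = 0`. Affine independence forces every
linear relation among the `ρ_i` to be proportional to `λ`, which has no zero entry; but the
relation just found vanishes at an index `j < k` different from `t`, and is nonzero.
-/

def coeVec {n : ℕ} (v : Fin n → ℤ) : Fin n → ℝ := fun j => (v j : ℝ)

open Finset

section AffineRelations

variable {𝕜 V ι : Type*} [Field 𝕜] [AddCommGroup V] [Module 𝕜 V] [Fintype ι]
  {p : ι → V} {w c : ι → 𝕜}

theorem AffineIndependent.eq_smul_of_sum_smul_eq_zero (hp : AffineIndependent 𝕜 p)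
    (hw : ∑ i, w i • p i = 0) (hw₀ : ∑ i, w i ≠ 0) (hc : ∑ i, c i • p i = 0) :
    c = ((∑ i, c i) / ∑ i, w i) • w := by
  funext i
  have := hp.eq_zero_of_sum_eq_zero (s := univ) (w := c - ((∑ i, c i) / ∑ i, w i) • w)
    (by simp [sum_sub_distrib, ← mul_sum, hw₀])
    (by simp [sub_smul, sum_sub_distrib, mul_smul, ← smul_sum, hc, hw]) i (mem_univ i)
  simpa [sub_eq_zero] using this

theorem AffineIndependent.eq_zero_of_sum_smul_eq_zero_of_apply_eq_zero
    (hp : AffineIndependent 𝕜 p) (hw : ∑ i, w i • p i = 0) (hw₀ : ∑ i, w i ≠ 0) {j : ι}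
    (hwj : w j ≠ 0) (hc : ∑ i, c i • p i = 0) (hcj : c j = 0) : c = 0 := by
  have hprop := hp.eq_smul_of_sum_smul_eq_zero hw hw₀ hc
  have hscalar : (∑ i, c i) / ∑ i, w i = 0 := by
    simpa [hcj, hwj] using (congrFun hprop j).symm
  rwa [hscalar, zero_smul] at hprop

theorem AffineIndependent.sum_add_sum_ne_zero [CharZero 𝕜] [DecidableEq ι]
    (hp : AffineIndependent 𝕜 p) (hw : ∑ i, w i • p i = 0) (hw₀ : ∑ i, w i ≠ 0)
    {S T : Finset ι} (hS : S.Nonempty) {j : ι} (hwj : w j ≠ 0) (hjS : j ∉ S) (hjT : j ∉ T) :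
    ∑ i ∈ S, p i + ∑ i ∈ T, p i ≠ 0 := by
  intro hsum
  set c : ι → 𝕜 := fun i => (if i ∈ S then 1 else 0) + if i ∈ T then 1 else 0
  have hc : ∑ i, c i • p i = 0 := by
    simpa [c, add_smul, sum_add_distrib, ite_smul, sum_ite_mem] using hsum
  have hc0 := hp.eq_zero_of_sum_smul_eq_zero_of_apply_eq_zero hw hw₀ hwj hc
    (by simp [c, hjS, hjT])
  obtain ⟨s, hs⟩ := hS
  have hcs := congrFun hc0 s
  by_cases hsT : s ∈ T <;> norm_num [c, hs, hsT] at hcs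

end AffineRelations

theorem neg_sum_mem_convexHull_of_sum_smul_eq_zero {𝕜 V ι : Type*} [Field 𝕜] [LinearOrder 𝕜]
    [IsStrictOrderedRing 𝕜] [AddCommGroup V] [Module 𝕜 V] [Fintype ι] [DecidableEq ι]
    {p : ι → V} {w : ι → 𝕜} (hw_nonneg : ∀ i, 0 ≤ w i) (hw₀ : 0 < ∑ i, w i)
    (hw : ∑ i, w i • p i = 0) {S : Finset ι} (hS : ∀ i ∈ S, ∑ i, w i ≤ (#S + 1) * w i) :
    -∑ i ∈ S, p i ∈ convexHull 𝕜 (Set.range p) := by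
  set a : 𝕜 := (#S + 1) / ∑ i, w i
  have hweights : ∑ i, (a * w i - if i ∈ S then 1 else 0) • p i = -∑ i ∈ S, p i := by
    simp [sub_smul, sum_sub_distrib, mul_smul, ← smul_sum, hw, ite_smul, sum_ite_mem]
  rw [← hweights]
  refine (convex_convexHull 𝕜 _).sum_mem (fun i _ => ?_) ?_
    fun i _ => subset_convexHull 𝕜 _ ⟨i, rfl⟩
  · split_ifs with hi
    · rw [sub_nonneg, div_mul_eq_mul_div, le_div_iff₀ hw₀, one_mul]
      exact hS i hi
    · simpa using mul_nonneg (div_nonneg (by positivity) hw₀.le) (hw_nonneg i)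
  · simp [sum_sub_distrib, ← mul_sum, a, hw₀.ne']

theorem Fin.exists_lt_ne_of_two_le {n : ℕ} {k : Fin (n + 1)} (hk : 2 ≤ k.val)
    (t : Fin (n + 1)) : ∃ j < k, j ≠ t := by
  by_cases ht : t.val = 0
  · exact ⟨⟨1, by omega⟩, Fin.lt_def.mpr (by dsimp only; omega),
      Fin.ne_of_val_ne (by dsimp only; omega)⟩
  · exact ⟨⟨0, by omega⟩, Fin.lt_def.mpr (by dsimp only; omega),
      Fin.ne_of_val_ne (by dsimp only; omega)⟩

section Simplex

variable {𝕜 V : Type*} [Field 𝕜] [AddCommGroup V] [Module 𝕜 V] {n : ℕ}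
  {p : Fin (n + 1) → V} {w : Fin (n + 1) → 𝕜} {k : Fin (n + 1)}

theorem neg_sum_Ici_mem_convexHull [LinearOrder 𝕜] [IsStrictOrderedRing 𝕜]
    (hw_pos : ∀ i, 0 < w i) (hw_mono : Monotone w) (hw : ∑ i, w i • p i = 0)
    (hk : ∑ i, w i ≤ (n - k.val + 2) * w k) :
    -∑ i ∈ Ici k, p i ∈ convexHull 𝕜 (Set.range p) := by
  have hcard : (#(Ici k) : 𝕜) + 1 = n - k.val + 2 := by
    rw [Fin.card_Ici, Nat.cast_sub k.is_lt.le]; push_cast; ring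
  rw [← hcard] at hk
  refine neg_sum_mem_convexHull_of_sum_smul_eq_zero (fun i => (hw_pos i).le)
    (sum_pos (fun i _ => hw_pos i) univ_nonempty) hw fun i hi => ?_
  exact hk.trans (mul_le_mul_of_nonneg_left (hw_mono (mem_Ici.mp hi)) (by positivity))

theorem AffineIndependent.neg_sum_Ici_notMem [CharZero 𝕜] (hp : AffineIndependent 𝕜 p)
    (hw : ∑ i, w i • p i = 0) (hw₀ : ∑ i, w i ≠ 0) (hw_ne : ∀ i, w i ≠ 0) (hk : 2 ≤ k.val) :
    -∑ i ∈ Ici k, p i ∉ insert 0 (Set.range p) := by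
  have hjS {j : Fin (n + 1)} (hjk : j < k) : j ∉ Ici k := by simpa using hjk
  rintro (hzero | ⟨t, ht⟩)
  · obtain ⟨j, hjk, -⟩ := Fin.exists_lt_ne_of_two_le hk k
    exact hp.sum_add_sum_ne_zero hw hw₀ nonempty_Ici (hw_ne j) (hjS hjk) (notMem_empty j)
      (by simpa using hzero)
  · obtain ⟨j, hjk, hjt⟩ := Fin.exists_lt_ne_of_two_le hk t
    exact hp.sum_add_sum_ne_zero hw hw₀ nonempty_Ici (hw_ne j) (hjS hjk)
      (notMem_singleton.mpr hjt) (by simp [ht])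

end Simplex

theorem coeVec_zero {n : ℕ} : coeVec (0 : Fin n → ℤ) = 0 := by
  ext; simp [coeVec]

theorem coeVec_neg_sum {n : ℕ} {ι : Type*} (S : Finset ι) (v : ι → Fin n → ℤ) :
    coeVec (-∑ i ∈ S, v i) = -∑ i ∈ S, coeVec (v i) := by
  ext; simp [coeVec]

theorem coeVec_sum_smul {n : ℕ} {ι : Type*} (S : Finset ι) (a : ι → ℤ) (v : ι → Fin n → ℤ) :
    coeVec (∑ i ∈ S, a i • v i) = ∑ i ∈ S, (a i : ℝ) • coeVec (v i) := by
  ext; simp [coeVec]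

theorem terminal_weight_bound_general (n : ℕ) (ρ : Fin (n + 1) → Fin n → ℤ)
    (lam : Fin (n + 1) → ℤ) (hpos : ∀ i, 0 < lam i) (hmono : Monotone lam)
    (hrel : ∑ i, lam i • ρ i = 0)
    (haff : AffineIndependent ℝ (fun i => coeVec (ρ i)))
    (P : Set (Fin n → ℝ))
    (hP : P = convexHull ℝ (Set.range fun i => coeVec (ρ i)))
    (hterm : ∀ x : Fin n → ℤ, coeVec x ∈ P → x = 0 ∨ ∃ i, x = ρ i) :
    ∀ k : Fin (n + 1), 2 ≤ k.val →
      (lam k : ℝ) / (∑ i, (lam i : ℝ)) < 1 / ((n : ℝ) - (k.val : ℝ) + 2) := by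
  intro k hk
  have hposR : ∀ i, (0 : ℝ) < lam i := fun i => by exact_mod_cast hpos i
  have hsum_pos : 0 < ∑ i, (lam i : ℝ) := sum_pos (fun i _ => hposR i) univ_nonempty
  have hrelR : ∑ i, (lam i : ℝ) • coeVec (ρ i) = 0 := by
    rw [← coeVec_sum_smul, hrel, coeVec_zero]
  have hkn : (k.val : ℝ) ≤ n := by exact_mod_cast Nat.lt_succ_iff.mp k.is_lt
  by_contra hbound
  rw [not_lt, div_le_div_iff₀ (by linarith) hsum_pos, one_mul, mul_comm] at hbound
  have hmem : coeVec (-∑ i ∈ Ici k, ρ i) ∈ P := by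
    rw [hP, coeVec_neg_sum]
    exact neg_sum_Ici_mem_convexHull hposR (fun i j hij => by exact_mod_cast hmono hij)
      hrelR hbound
  refine haff.neg_sum_Ici_notMem hrelR hsum_pos.ne' (fun i => (hposR i).ne') hk ?_
  rw [← coeVec_neg_sum]
  rcases hterm _ hmem with hzero | ⟨t, ht⟩
  · simp [hzero, coeVec_zero]
  · exact Or.inr ⟨t, by rw [ht]⟩

/-- **Strict upper bound on the weights of a terminal fake weighted projective space.**
Let λ₀ ≤ λ₁ ≤ … ≤ λₙ be positive integers with gcd 1, h = Σλᵢ, and let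
P = conv(ρ₀,…,ρₙ) be a simplex with primitive vertices in ℤⁿ satisfying Σλᵢρᵢ = 0,
whose only lattice points are its vertices and the origin (the terminal condition).
Then for every k with 2 ≤ k ≤ n, λ_k/h < 1/(n−k+2). -/
theorem terminal_weight_bound (n : ℕ) (ρ : Fin (n + 1) → Fin n → ℤ)
    (lam : Fin (n + 1) → ℤ) (hpos : ∀ i, 0 < lam i) (hmono : Monotone lam)
    (hgcd : Finset.univ.gcd lam = 1)
    (hprim : ∀ i, Finset.univ.gcd (ρ i) = 1)
    (hrel : ∑ i, lam i • ρ i = 0)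
    (haff : AffineIndependent ℝ (fun i => coeVec (ρ i)))
    (P : Set (Fin n → ℝ))
    (hP : P = convexHull ℝ (Set.range fun i => coeVec (ρ i)))
    (h0 : (0 : Fin n → ℝ) ∈ interior P)
    (hterm : ∀ x : Fin n → ℤ, coeVec x ∈ P → x = 0 ∨ ∃ i, x = ρ i) :
    ∀ k : Fin (n + 1), 2 ≤ k.val →
      (lam k : ℝ) / (∑ i, (lam i : ℝ)) < 1 / ((n : ℝ) - (k.val : ℝ) + 2) :=
  terminal_weight_bound_general n ρ lam hpos hmono hrel haff P hP hterm
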